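/- arXiv:2505.13548 — 7 statements merged into one kernel-verified Lean document; each statement's English description precedes it below -/
import Mathlib

section
/- (Lemma: Inverse of E.) The delocalization operator E is invertible on integrable functions, with inverse given by the explicit operator E⁻¹: for every integrable h : α → ℝ and every x ∈ α one has E(E⁻¹ h)(x) = h(x) and E⁻¹(E h)(x) = h(x). -/
open MeasureTheory

/-- Total (coordinate) volume `V := μ(α)` as a real number. -/
noncomputable def totalVol {α : Type*} [MeasurableSpace α] (μ : Measure α) : ℝ :=
  (μ Set.univ).toReal

/-- Spatial average `⟨f⟩ := (1/V) ∫ f dμ`. -/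
noncomputable def avg {α : Type*} [MeasurableSpace α] (μ : Measure α) (f : α → ℝ) : ℝ :=
  (totalVol μ)⁻¹ * ∫ x, f x ∂μ

/-- The delocalization operator `E`:
`(E g)(x) = g(x) + ⟨g⟩ − W(x)⁻¹ ⟨W·g⟩`. -/
noncomputable def opE {α : Type*} [MeasurableSpace α] (μ : Measure α) (W : α → ℝ)
    (g : α → ℝ) : α → ℝ :=
  fun x => g x + avg μ g - (W x)⁻¹ * avg μ (fun y => W y * g y)

/-- The operator `E⁻¹`:
`(E⁻¹ h)(x) = h(x) − W(x)⁻¹ (∫h)/(∫W⁻¹) − (∫W·h)/(∫W) + 2 W(x)⁻¹ V (∫W·h)/((∫W⁻¹)(∫W))`. -/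
noncomputable def opEinv {α : Type*} [MeasurableSpace α] (μ : Measure α) (W : α → ℝ)
    (h : α → ℝ) : α → ℝ :=
  fun x => h x
    - (W x)⁻¹ * (∫ y, h y ∂μ) / (∫ y, (W y)⁻¹ ∂μ)
    - (∫ y, W y * h y ∂μ) / (∫ y, W y ∂μ)
    + 2 * (W x)⁻¹ * totalVol μ * (∫ y, W y * h y ∂μ)
        / ((∫ y, (W y)⁻¹ ∂μ) * (∫ y, W y ∂μ))

/-- The projector-type operator `G₊`:
`(G₊ h)(x) = W(x)·h(x) − W(x)·(∫W·h)/(∫W)`. -/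
noncomputable def opGplus {α : Type*} [MeasurableSpace α] (μ : Measure α) (W : α → ℝ)
    (h : α → ℝ) : α → ℝ :=
  fun x => W x * h x - W x * (∫ y, W y * h y ∂μ) / (∫ y, W y ∂μ)

/-- The projector-type operator `G₋`:
`(G₋ h)(x) = W(x)⁻¹·h(x) − W(x)⁻¹·(∫W⁻¹·h)/(∫W⁻¹)`. -/
noncomputable def opGminus {α : Type*} [MeasurableSpace α] (μ : Measure α) (W : α → ℝ)
    (h : α → ℝ) : α → ℝ :=
  fun x => (W x)⁻¹ * h x - (W x)⁻¹ * (∫ y, (W y)⁻¹ * h y ∂μ) / (∫ y, (W y)⁻¹ ∂μ)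

/-
Both `E` and `E⁻¹` send a function `f` to `f + a·W⁻¹ + b`, where the constants `a, b` depend
linearly on the two moments `∫ f` and `∫ W·f`. The moments of `f + a·W⁻¹ + b` are in turn
`∫ f + a ∫W⁻¹ + b V` and `∫ W·f + a V + b ∫W`, so each composite is `h + a'·W⁻¹ + b'`
with `a', b'` rational in `∫ h, ∫ W·h, ∫ W⁻¹, ∫ W`, and a field computation shows
`a' = b' = 0`.
-/

section

variable {α : Type*} [MeasurableSpace α] {μ : Measure α} {W h : α → ℝ}

lemma integral_pos_of_forall_pos [NeZero μ] {f : α → ℝ} (hf : ∀ x, 0 < f x)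
    (hfi : Integrable f μ) : 0 < ∫ x, f x ∂μ := by
  refine (integral_pos_iff_support_of_nonneg (fun x => (hf x).le) hfi).2 ?_
  rw [Function.support_eq_univ fun x => (hf x).ne']
  exact Measure.measure_univ_pos.2 (NeZero.ne μ)

lemma integral_add_mul_inv_add [IsFiniteMeasure μ] (hh : Integrable h μ)
    (hWinv : Integrable (fun y => (W y)⁻¹) μ) (a b : ℝ) :
    ∫ y, (h y + a * (W y)⁻¹ + b) ∂μ
      = ∫ y, h y ∂μ + a * ∫ y, (W y)⁻¹ ∂μ + b * totalVol μ := by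
  have hhWinv : Integrable (fun y => h y + a * (W y)⁻¹) μ := hh.add (hWinv.const_mul a)
  rw [integral_add hhWinv (integrable_const b), integral_add hh (hWinv.const_mul a),
    integral_const_mul, integral_const, smul_eq_mul, mul_comm b]
  rfl

lemma integral_mul_add_mul_inv_add [IsFiniteMeasure μ] (hW0 : ∀ y, W y ≠ 0)
    (hW : Integrable W μ) (hWh : Integrable (fun y => W y * h y) μ) (a b : ℝ) :
    ∫ y, W y * (h y + a * (W y)⁻¹ + b) ∂μ
      = ∫ y, W y * h y ∂μ + a * totalVol μ + b * ∫ y, W y ∂μ := by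
  have hexpand :
      (fun y => W y * (h y + a * (W y)⁻¹ + b)) = fun y => W y * h y + a + b * W y := by
    funext y
    field_simp [hW0 y]
  have hWha : Integrable (fun y => W y * h y + a) μ := hWh.add (integrable_const a)
  rw [hexpand, integral_add hWha (hW.const_mul b), integral_add hWh (integrable_const a),
    integral_const_mul, integral_const, smul_eq_mul, mul_comm _ a]
  rfl

lemma opE_eq_add_mul_inv_add (g : α → ℝ) :
    opE μ W g = fun x => g x + -avg μ (fun y => W y * g y) * (W x)⁻¹ + avg μ g := by
  funext x
  simp only [opE]
  ring

lemma opEinv_eq_add_mul_inv_add :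
    opEinv μ W h = fun x => h x
      + (2 * totalVol μ * (∫ y, W y * h y ∂μ) / ((∫ y, (W y)⁻¹ ∂μ) * ∫ y, W y ∂μ)
          - (∫ y, h y ∂μ) / ∫ y, (W y)⁻¹ ∂μ) * (W x)⁻¹
      + -((∫ y, W y * h y ∂μ) / ∫ y, W y ∂μ) := by
  funext x
  simp only [opEinv]
  ring

variable [IsFiniteMeasure μ] (hV : totalVol μ ≠ 0) (hW0 : ∀ y, W y ≠ 0)
  (hW : Integrable W μ) (hWinv : Integrable (fun y => (W y)⁻¹) μ) (hB : ∫ y, W y ∂μ ≠ 0)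
  (hA : ∫ y, (W y)⁻¹ ∂μ ≠ 0) (hh : Integrable h μ) (hWh : Integrable (fun y => W y * h y) μ)
include hV hW0 hW hWinv hB hA hh hWh

lemma opE_opEinv_apply (x : α) : opE μ W (opEinv μ W h) x = h x := by
  rw [opEinv_eq_add_mul_inv_add]
  simp only [opE, avg]
  rw [integral_add_mul_inv_add hh hWinv, integral_mul_add_mul_inv_add hW0 hW hWh]
  have hWx := hW0 x
  generalize ∫ y, (W y)⁻¹ ∂μ = A at hA ⊢
  generalize ∫ y, W y ∂μ = B at hB ⊢
  field_simp
  ring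

lemma opEinv_opE_apply (x : α) : opEinv μ W (opE μ W h) x = h x := by
  rw [opE_eq_add_mul_inv_add]
  simp only [opEinv, avg]
  rw [integral_add_mul_inv_add hh hWinv, integral_mul_add_mul_inv_add hW0 hW hWh]
  have hWx := hW0 x
  generalize ∫ y, (W y)⁻¹ ∂μ = A at hA ⊢
  generalize ∫ y, W y ∂μ = B at hB ⊢
  field_simp
  ring

end

theorem opE_inverse_general
    {α : Type*} [MeasurableSpace α] (μ : Measure α) [IsFiniteMeasure μ]
    (hV : 0 < totalVol μ)
    (W : α → ℝ) (hW : Measurable W)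
    (c C : ℝ) (hc : 0 < c)
    (hbound : ∀ x, c ≤ W x ∧ W x ≤ C) :
    ∀ h : α → ℝ, Integrable h μ → ∀ x,
      opE μ W (opEinv μ W h) x = h x ∧ opEinv μ W (opE μ W h) x = h x := by
  intro h hh x
  have hWpos : ∀ y, 0 < W y := fun y => hc.trans_le (hbound y).1
  have hWnorm : ∀ y, ‖W y‖ ≤ C := fun y => by
    rw [Real.norm_of_nonneg (hWpos y).le]; exact (hbound y).2
  have hWinvnorm : ∀ y, ‖(W y)⁻¹‖ ≤ c⁻¹ := fun y => by
    rw [Real.norm_of_nonneg (inv_pos.2 (hWpos y)).le]; exact inv_anti₀ hc (hbound y).1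
  have hW_int : Integrable W μ := .of_bound hW.aestronglyMeasurable C (.of_forall hWnorm)
  have hWinv_int : Integrable (fun y => (W y)⁻¹) μ :=
    .of_bound hW.inv.aestronglyMeasurable c⁻¹ (.of_forall hWinvnorm)
  have hWh : Integrable (fun y => W y * h y) μ :=
    hh.bdd_mul hW.aestronglyMeasurable (.of_forall hWnorm)
  have : NeZero μ := ⟨fun hμ => hV.ne' (by simp [totalVol, hμ])⟩
  have hW_integral : 0 < ∫ y, W y ∂μ := integral_pos_of_forall_pos hWpos hW_int
  have hWinv_integral : 0 < ∫ y, (W y)⁻¹ ∂μ :=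
    integral_pos_of_forall_pos (fun y => inv_pos.2 (hWpos y)) hWinv_int
  have hW0 : ∀ y, W y ≠ 0 := fun y => (hWpos y).ne'
  exact ⟨opE_opEinv_apply hV.ne' hW0 hW_int hWinv_int hW_integral.ne' hWinv_integral.ne' hh
      hWh x,
    opEinv_opE_apply hV.ne' hW0 hW_int hWinv_int hW_integral.ne' hWinv_integral.ne' hh hWh x⟩

/-- Lemma: Inverse of `E`. The delocalization operator `E` is invertible
on integrable functions, with inverse given by the explicit operator `E⁻¹`:
for every integrable `h` and every `x`, `E(E⁻¹ h)(x) = h(x)` and `E⁻¹(E h)(x) = h(x)`. -/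
theorem opE_inverse
    {α : Type*} [MeasurableSpace α] (μ : Measure α) [IsFiniteMeasure μ]
    (hV : 0 < totalVol μ)
    (W : α → ℝ) (hW : Measurable W)
    (c C : ℝ) (hc : 0 < c) (hcC : c ≤ C)
    (hbound : ∀ x, c ≤ W x ∧ W x ≤ C) :
    ∀ h : α → ℝ, Integrable h μ → ∀ x,
      opE μ W (opEinv μ W h) x = h x ∧ opEinv μ W (opE μ W h) x = h x :=
  opE_inverse_general μ hV W hW c C hc hbound
end

section
/- (Symmetric form of the projector G₊ = Ĩ∘W∘E⁻¹.) For every integrable h : α → ℝ and every x ∈ α, the average-free part of W·(E⁻¹ h) at x equals (G₊ h)(x); that is, W(x)·(E⁻¹ h)(x) − ⟨W·(E⁻¹ h)⟩ = W(x)·h(x) − W(x)·(∫ W·h dμ)/(∫ W dμ). -/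
open MeasureTheory

/-! `W·E⁻¹h` differs from `G₊h` by a constant, and `G₊h` has zero mean since
`∫ W·h − (∫ W)·(∫ W·h)/(∫ W) = 0`. Subtracting the average kills the constant. -/

section Averages

variable {α : Type*} [MeasurableSpace α] {μ : Measure α} [IsFiniteMeasure μ]

theorem avg_add_const (hV : totalVol μ ≠ 0) {f : α → ℝ} (hf : Integrable f μ) (k : ℝ) :
    avg μ (fun y => f y + k) = avg μ f + k := by
  rw [avg, avg, integral_add hf (integrable_const k), integral_const, smul_eq_mul,
    Measure.real, ← totalVol]
  field_simp

theorem mul_totalVol_le_integral {f : α → ℝ} (hf : Integrable f μ) {c : ℝ}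
    (hcf : ∀ x, c ≤ f x) : c * totalVol μ ≤ ∫ x, f x ∂μ := by
  calc c * totalVol μ = ∫ _, c ∂μ := by
        rw [integral_const, smul_eq_mul, Measure.real, totalVol, mul_comm]
    _ ≤ ∫ x, f x ∂μ := integral_mono (integrable_const c) hf hcf

end Averages

section Operators

variable {α : Type*} [MeasurableSpace α] {μ : Measure α} {W : α → ℝ}

theorem integral_opGplus_eq_zero {h : α → ℝ} (hW : Integrable W μ)
    (hWh : Integrable (fun y => W y * h y) μ) (hIW : ∫ y, W y ∂μ ≠ 0) :
    ∫ y, opGplus μ W h y ∂μ = 0 := by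
  simp only [opGplus, mul_div_assoc]
  rw [integral_sub hWh (hW.mul_const _), integral_mul_const]
  field_simp
  ring

theorem mul_opEinv_eq_opGplus_add_const (h : α → ℝ) {x : α} (hWx : W x ≠ 0) :
    W x * opEinv μ W h x = opGplus μ W h x
      + (2 * totalVol μ * (∫ y, W y * h y ∂μ) / ((∫ y, (W y)⁻¹ ∂μ) * ∫ y, W y ∂μ)
        - (∫ y, h y ∂μ) / ∫ y, (W y)⁻¹ ∂μ) := by
  simp only [opEinv, opGplus]
  field_simp
  ring

end Operators

theorem opGplus_symmetric_form_general
    {α : Type*} [MeasurableSpace α] (μ : Measure α) [IsFiniteMeasure μ]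
    (hV : 0 < totalVol μ)
    (W : α → ℝ) (hW : Measurable W)
    (c C : ℝ) (hc : 0 < c)
    (hbound : ∀ x, c ≤ W x ∧ W x ≤ C) :
    ∀ h : α → ℝ, Integrable h μ → ∀ x,
      W x * opEinv μ W h x - avg μ (fun y => W y * opEinv μ W h y)
        = W x * h x - W x * (∫ y, W y * h y ∂μ) / (∫ y, W y ∂μ) := by
  intro h hh x
  have hWpos : ∀ y, 0 < W y := fun y => hc.trans_le (hbound y).1
  have hWnorm : ∀ᵐ y ∂μ, ‖W y‖ ≤ C := .of_forall fun y => by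
    rw [Real.norm_of_nonneg (hWpos y).le]; exact (hbound y).2
  have hWint : Integrable W μ := .of_bound hW.aestronglyMeasurable C hWnorm
  have hWhint : Integrable (fun y => W y * h y) μ := hh.bdd_mul hW.aestronglyMeasurable hWnorm
  have hIW : ∫ y, W y ∂μ ≠ 0 :=
    (mul_pos hc hV).trans_le (mul_totalVol_le_integral hWint fun y => (hbound y).1) |>.ne'
  have hsplit := fun y => mul_opEinv_eq_opGplus_add_const (μ := μ) h (hWpos y).ne'
  rw [funext hsplit, hsplit x, avg_add_const hV.ne'
    (f := opGplus μ W h) (hWhint.sub ((hWint.mul_const _).div_const _)), avg,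
    integral_opGplus_eq_zero hWint hWhint hIW, mul_zero, zero_add, opGplus]
  ring

/-- Symmetric form of the projector `G₊ = Ĩ∘W∘E⁻¹`.
For every integrable `h` and every `x`, the average-free part of `W·(E⁻¹ h)` at `x`
equals `(G₊ h)(x)`:
`W(x)·(E⁻¹ h)(x) − ⟨W·(E⁻¹ h)⟩ = W(x)·h(x) − W(x)·(∫ W·h dμ)/(∫ W dμ)`. -/
theorem opGplus_symmetric_form
    {α : Type*} [MeasurableSpace α] (μ : Measure α) [IsFiniteMeasure μ]
    (hV : 0 < totalVol μ)
    (W : α → ℝ) (hW : Measurable W)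
    (c C : ℝ) (hc : 0 < c) (hcC : c ≤ C)
    (hbound : ∀ x, c ≤ W x ∧ W x ≤ C) :
    ∀ h : α → ℝ, Integrable h μ → ∀ x,
      W x * opEinv μ W h x - avg μ (fun y => W y * opEinv μ W h y)
        = W x * h x - W x * (∫ y, W y * h y ∂μ) / (∫ y, W y ∂μ) :=
  opGplus_symmetric_form_general μ hV W hW c C hc hbound
end

section
/- (Symmetric form of the projector G₋ = E⁻¹∘W⁻¹∘Ĩ.) For every integrable h : α → ℝ and every x ∈ α, applying E⁻¹ to the function W⁻¹·(h − ⟨h⟩) gives (G₋ h)(x); that is, E⁻¹( W⁻¹·(h − ⟨h⟩·1) )(x) = W(x)⁻¹·h(x) − W(x)⁻¹·(∫ W⁻¹·h dμ)/(∫ W⁻¹ dμ). -/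
open MeasureTheory

/-! For `g = W⁻¹·(h − ⟨h⟩)` one has `∫ W·g = ∫ (h − ⟨h⟩) = 0`, which kills the last two terms
of `E⁻¹ g`; the remaining correction `−W⁻¹·(∫ g)/(∫ W⁻¹)`, with `∫ g = ∫ W⁻¹·h − ⟨h⟩·∫ W⁻¹`,
cancels the `−W⁻¹·⟨h⟩` part of `g`. -/

namespace MeasureTheory

variable {α : Type*} [MeasurableSpace α] {μ : Measure α}

theorem avg_eq_average (f : α → ℝ) : avg μ f = ⨍ x, f x ∂μ := by
  rw [average_eq, smul_eq_mul, avg, totalVol, measureReal_def]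

theorem opEinv_apply_of_integral_mul_eq_zero {W g : α → ℝ} (hWg : ∫ y, W y * g y ∂μ = 0) (x : α) :
    opEinv μ W g x = g x - (W x)⁻¹ * (∫ y, g y ∂μ) / ∫ y, (W y)⁻¹ ∂μ := by
  simp only [opEinv, hWg, zero_div, mul_zero, sub_zero, add_zero]

theorem Integrable.inv_mul_of_le {W h : α → ℝ} {c : ℝ} (hW : Measurable W) (hc : 0 < c)
    (hcW : ∀ x, c ≤ W x) (hh : Integrable h μ) : Integrable (fun x => (W x)⁻¹ * h x) μ := by
  refine hh.bdd_mul (c := c⁻¹) hW.inv.aestronglyMeasurable (ae_of_all _ fun x => ?_)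
  rw [Real.norm_eq_abs, abs_of_pos (inv_pos.2 (hc.trans_le (hcW x)))]
  exact inv_anti₀ hc (hcW x)

theorem integral_inv_pos {W : α → ℝ} (hμ : μ ≠ 0) (hW : ∀ x, 0 < W x)
    (hWi : Integrable (fun x => (W x)⁻¹) μ) : 0 < ∫ x, (W x)⁻¹ ∂μ := by
  rw [integral_pos_iff_support_of_nonneg (fun x => (inv_pos.2 (hW x)).le) hWi,
    Function.support_eq_univ fun x => (inv_pos.2 (hW x)).ne', Measure.measure_univ_pos]
  exact hμ

end MeasureTheory

theorem opGminus_symmetric_form_general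
    {α : Type*} [MeasurableSpace α] (μ : Measure α) [IsFiniteMeasure μ]
    (hV : 0 < totalVol μ)
    (W : α → ℝ) (hW : Measurable W)
    (c C : ℝ) (hc : 0 < c)
    (hbound : ∀ x, c ≤ W x ∧ W x ≤ C) :
    ∀ h : α → ℝ, Integrable h μ → ∀ x,
      opEinv μ W (fun y => (W y)⁻¹ * (h y - avg μ h)) x
        = (W x)⁻¹ * h x
          - (W x)⁻¹ * (∫ y, (W y)⁻¹ * h y ∂μ) / (∫ y, (W y)⁻¹ ∂μ) := by
  intro h hh x
  have hcW x := (hbound x).1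
  have hWpos x : 0 < W x := hc.trans_le (hcW x)
  have hWinv : Integrable (fun y => (W y)⁻¹) μ := by
    simpa using (integrable_const 1).inv_mul_of_le hW hc hcW
  have hμ : μ ≠ 0 := fun h0 => by simp [h0, totalVol] at hV
  have hI := (integral_inv_pos hμ hWpos hWinv).ne'
  have hWg : ∫ y, W y * ((W y)⁻¹ * (h y - avg μ h)) ∂μ = 0 := by
    simp_rw [mul_inv_cancel_left₀ (hWpos _).ne', avg_eq_average, integral_sub_average]
  have hg : ∫ y, (W y)⁻¹ * (h y - avg μ h) ∂μ
      = (∫ y, (W y)⁻¹ * h y ∂μ) - (∫ y, (W y)⁻¹ ∂μ) * avg μ h := by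
    simp_rw [mul_sub]
    rw [integral_sub (hh.inv_mul_of_le hW hc hcW) (hWinv.mul_const _), integral_mul_const]
  rw [opEinv_apply_of_integral_mul_eq_zero hWg, hg]
  generalize ∫ y, (W y)⁻¹ ∂μ = I at hI ⊢
  field_simp
  ring

/-- Symmetric form of the projector `G₋ = E⁻¹∘W⁻¹∘Ĩ`.
For every integrable `h` and every `x`, applying `E⁻¹` to the function `W⁻¹·(h − ⟨h⟩)`
gives `(G₋ h)(x)`:
`E⁻¹(W⁻¹·(h − ⟨h⟩·1))(x) = W(x)⁻¹·h(x) − W(x)⁻¹·(∫ W⁻¹·h dμ)/(∫ W⁻¹ dμ)`. -/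
theorem opGminus_symmetric_form
    {α : Type*} [MeasurableSpace α] (μ : Measure α) [IsFiniteMeasure μ]
    (hV : 0 < totalVol μ)
    (W : α → ℝ) (hW : Measurable W)
    (c C : ℝ) (hc : 0 < c) (hcC : c ≤ C)
    (hbound : ∀ x, c ≤ W x ∧ W x ≤ C) :
    ∀ h : α → ℝ, Integrable h μ → ∀ x,
      opEinv μ W (fun y => (W y)⁻¹ * (h y - avg μ h)) x
        = (W x)⁻¹ * h x
          - (W x)⁻¹ * (∫ y, (W y)⁻¹ * h y ∂μ) / (∫ y, (W y)⁻¹ ∂μ) :=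
  opGminus_symmetric_form_general μ hV W hW c C hc hbound
end

section
/- (Variation identity for E⁻¹, exact two-weight form: δE⁻¹ = −E⁻¹·δW⁻¹·G₊ − G₋·δW·E⁻¹.) Let W₁ and W₂ both be measurable weights bounded between positive constants, with associated operators E₁⁻¹, E₂⁻¹, with G₊⁽²⁾ built from W₂ and G₋⁽¹⁾ built from W₁. Then for every integrable h : α → ℝ and every x ∈ α: (E₂⁻¹ h)(x) − (E₁⁻¹ h)(x) = − E₁⁻¹( (W₂⁻¹ − W₁⁻¹) · (G₊⁽²⁾ h) )(x) − G₋⁽¹⁾( (W₂ − W₁) · (E₂⁻¹ h) )(x). -/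
open MeasureTheory

/-! Let `m := ∫ W₂ h / ∫ W₂`, so that `G₊⁽²⁾ h = W₂ (h - m)` and `E₂⁻¹ h = h - m - s W₂⁻¹` for a
scalar `s`. In the function fed to `E₁⁻¹` and in `W₁⁻¹` times the one fed to `G₋⁽¹⁾`, `h - m`
carries the coefficients `1 - W₂/W₁` and `W₂/W₁ - 1`, so these two functions add up to
`s (W₂⁻¹ - W₁⁻¹)`; and only the sum of their integrals enters the right-hand side. Likewise
`W₁ (W₂⁻¹ - W₁⁻¹) G₊⁽²⁾ h = (W₁ - W₂)(h - m)`. Hence every integral on the right is a combination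
of `∫ h`, `∫ Wᵢ h`, `∫ Wᵢ`, `∫ Wᵢ⁻¹`, and the identity reduces to a rational identity in these. -/

open scoped ENNReal

section

variable {α : Type*} [MeasurableSpace α] {μ : Measure α}

structure IsBoundedWeight (μ : Measure α) (W : α → ℝ) : Prop where
  pos : ∀ x, 0 < W x
  memLp_top : MemLp W ∞ μ
  memLp_top_inv : MemLp (fun x => (W x)⁻¹) ∞ μ

theorem isBoundedWeight_of_bounds {W : α → ℝ} {c C : ℝ} (hW : Measurable W) (hc : 0 < c)
    (hbound : ∀ x, c ≤ W x ∧ W x ≤ C) : IsBoundedWeight μ W where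
  pos x := hc.trans_le (hbound x).1
  memLp_top := memLp_top_of_bound hW.aestronglyMeasurable C <| .of_forall fun x => by
    rw [Real.norm_of_nonneg (hc.trans_le (hbound x).1).le]
    exact (hbound x).2
  memLp_top_inv := memLp_top_of_bound hW.inv.aestronglyMeasurable c⁻¹ <| .of_forall fun x => by
    have hWx := hc.trans_le (hbound x).1
    rw [Real.norm_of_nonneg (inv_pos.2 hWx).le]
    exact inv_anti₀ hc (hbound x).1

namespace IsBoundedWeight

variable {W : α → ℝ} (hW : IsBoundedWeight μ W)
include hW

theorem inv : IsBoundedWeight μ fun x => (W x)⁻¹ where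
  pos x := inv_pos.2 (hW.pos x)
  memLp_top := hW.memLp_top_inv
  memLp_top_inv := by simpa only [inv_inv] using hW.memLp_top

theorem integrable_mul {h : α → ℝ} (hh : Integrable h μ) : Integrable (fun x => W x * h x) μ :=
  hh.mul_of_top_right hW.memLp_top

variable [IsFiniteMeasure μ]

theorem integrable : Integrable W μ :=
  hW.memLp_top.integrable le_top

theorem integral_pos (hμ : μ ≠ 0) : 0 < ∫ x, W x ∂μ := by
  rw [integral_pos_iff_support_of_nonneg (fun x => (hW.pos x).le) hW.integrable,
    Function.support_eq_univ (fun x => (hW.pos x).ne'), pos_iff_ne_zero]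
  simpa using hμ

theorem integrable_opGplus {h : α → ℝ} (hh : Integrable h μ) : Integrable (opGplus μ W h) μ :=
  (hW.integrable_mul hh).sub ((hW.integrable.mul_const _).div_const _)

theorem integrable_opEinv {h : α → ℝ} (hh : Integrable h μ) : Integrable (opEinv μ W h) μ := by
  have := hW.inv.integrable
  unfold opEinv
  fun_prop

end IsBoundedWeight

noncomputable def weightedMean (μ : Measure α) (W h : α → ℝ) : ℝ :=
  (∫ y, W y * h y ∂μ) / ∫ y, W y ∂μ

noncomputable def opEinvCoeff (μ : Measure α) (W h : α → ℝ) : ℝ :=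
  ((∫ y, h y ∂μ) - 2 * totalVol μ * weightedMean μ W h) / ∫ y, (W y)⁻¹ ∂μ

theorem opGplus_apply (μ : Measure α) (W h : α → ℝ) (x : α) :
    opGplus μ W h x = W x * (h x - weightedMean μ W h) := by
  simp only [opGplus, weightedMean]
  ring

theorem opEinv_apply (μ : Measure α) (W h : α → ℝ) (x : α) :
    opEinv μ W h x = h x - weightedMean μ W h - (W x)⁻¹ * opEinvCoeff μ W h := by
  simp only [opEinv, opEinvCoeff, weightedMean]
  ring

theorem opGminus_apply (μ : Measure α) (W h : α → ℝ) (x : α) :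
    opGminus μ W h x
      = (W x)⁻¹ * (h x - (∫ y, (W y)⁻¹ * h y ∂μ) / ∫ y, (W y)⁻¹ ∂μ) := by
  simp only [opGminus, mul_sub, mul_div_assoc]

section TwoWeights

variable {W₁ W₂ h : α → ℝ}

theorem inv_sub_inv_mul_opGplus_add {y : α} (h₁ : W₁ y ≠ 0) (h₂ : W₂ y ≠ 0) :
    ((W₂ y)⁻¹ - (W₁ y)⁻¹) * opGplus μ W₂ h y + (W₁ y)⁻¹ * ((W₂ y - W₁ y) * opEinv μ W₂ h y)
      = opEinvCoeff μ W₂ h * ((W₂ y)⁻¹ - (W₁ y)⁻¹) := by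
  rw [opGplus_apply, opEinv_apply]
  field_simp
  ring

theorem mul_inv_sub_inv_mul_opGplus {y : α} (h₁ : W₁ y ≠ 0) (h₂ : W₂ y ≠ 0) :
    W₁ y * (((W₂ y)⁻¹ - (W₁ y)⁻¹) * opGplus μ W₂ h y)
      = W₁ y * h y - W₂ y * h y - weightedMean μ W₂ h * (W₁ y - W₂ y) := by
  rw [opGplus_apply]
  field_simp

variable [IsFiniteMeasure μ] (hw₁ : IsBoundedWeight μ W₁) (hw₂ : IsBoundedWeight μ W₂)
  (hh : Integrable h μ)
include hw₁ hw₂ hh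

theorem integral_inv_sub_inv_mul_opGplus_add :
    ∫ y, ((W₂ y)⁻¹ - (W₁ y)⁻¹) * opGplus μ W₂ h y ∂μ
      + ∫ y, (W₁ y)⁻¹ * ((W₂ y - W₁ y) * opEinv μ W₂ h y) ∂μ
      = opEinvCoeff μ W₂ h * ((∫ y, (W₂ y)⁻¹ ∂μ) - ∫ y, (W₁ y)⁻¹ ∂μ) := by
  have hG : Integrable (fun y => ((W₂ y)⁻¹ - (W₁ y)⁻¹) * opGplus μ W₂ h y) μ :=
    (hw₂.integrable_opGplus hh).mul_of_top_right (hw₂.memLp_top_inv.sub hw₁.memLp_top_inv)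
  have hE : Integrable (fun y => (W₁ y)⁻¹ * ((W₂ y - W₁ y) * opEinv μ W₂ h y)) μ :=
    ((hw₂.integrable_opEinv hh).mul_of_top_right (hw₂.memLp_top.sub hw₁.memLp_top)).mul_of_top_right
      hw₁.memLp_top_inv
  rw [← integral_add hG hE, ← integral_sub hw₂.inv.integrable hw₁.inv.integrable,
    ← integral_const_mul]
  exact integral_congr_ae <| .of_forall fun y =>
    inv_sub_inv_mul_opGplus_add (hw₁.pos y).ne' (hw₂.pos y).ne'

theorem integral_mul_inv_sub_inv_mul_opGplus :
    ∫ y, W₁ y * (((W₂ y)⁻¹ - (W₁ y)⁻¹) * opGplus μ W₂ h y) ∂μ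
      = (∫ y, W₁ y * h y ∂μ) - (∫ y, W₂ y * h y ∂μ)
        - weightedMean μ W₂ h * ((∫ y, W₁ y ∂μ) - ∫ y, W₂ y ∂μ) := by
  have := hw₁.integrable_mul hh
  have := hw₂.integrable_mul hh
  have := hw₁.integrable
  have := hw₂.integrable
  rw [integral_congr_ae (.of_forall fun y =>
      mul_inv_sub_inv_mul_opGplus (hw₁.pos y).ne' (hw₂.pos y).ne'),
    integral_sub, integral_sub, integral_const_mul, integral_sub]
  all_goals fun_prop

end TwoWeights

end

theorem opEinv_variation_two_weights_general
    {α : Type*} [MeasurableSpace α] (μ : Measure α) [IsFiniteMeasure μ]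
    (hV : 0 < totalVol μ)
    (W₁ W₂ : α → ℝ) (hW₁ : Measurable W₁) (hW₂ : Measurable W₂)
    (c₁ C₁ : ℝ) (hc₁ : 0 < c₁)
    (hbound₁ : ∀ x, c₁ ≤ W₁ x ∧ W₁ x ≤ C₁)
    (c₂ C₂ : ℝ) (hc₂ : 0 < c₂)
    (hbound₂ : ∀ x, c₂ ≤ W₂ x ∧ W₂ x ≤ C₂) :
    ∀ h : α → ℝ, Integrable h μ → ∀ x,
      opEinv μ W₂ h x - opEinv μ W₁ h x
        = - opEinv μ W₁ (fun y => ((W₂ y)⁻¹ - (W₁ y)⁻¹) * opGplus μ W₂ h y) x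
          - opGminus μ W₁ (fun y => (W₂ y - W₁ y) * opEinv μ W₂ h y) x := by
  intro h hh x
  have hμ : μ ≠ 0 := by
    rintro rfl
    simp [totalVol] at hV
  have hw₁ : IsBoundedWeight μ W₁ := isBoundedWeight_of_bounds hW₁ hc₁ hbound₁
  have hw₂ : IsBoundedWeight μ W₂ := isBoundedWeight_of_bounds hW₂ hc₂ hbound₂
  have hcross := eq_sub_of_add_eq' (integral_inv_sub_inv_mul_opGplus_add hw₁ hw₂ hh)
  have hmoment := integral_mul_inv_sub_inv_mul_opGplus hw₁ hw₂ hh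
  rw [opEinv_apply, opEinv_apply, opEinv_apply, opGminus_apply, opGplus_apply, opEinv_apply]
  simp only [opEinvCoeff, weightedMean] at hcross hmoment ⊢
  rw [hcross, hmoment]
  have hW₁x := (hw₁.pos x).ne'
  have hW₂x := (hw₂.pos x).ne'
  have hB₁ := (hw₁.integral_pos hμ).ne'
  have hB₂ := (hw₂.integral_pos hμ).ne'
  have hA₁ : ∫ y, (W₁ y)⁻¹ ∂μ ≠ 0 := (hw₁.inv.integral_pos hμ).ne'
  have hA₂ : ∫ y, (W₂ y)⁻¹ ∂μ ≠ 0 := (hw₂.inv.integral_pos hμ).ne'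
  -- `field_simp` would rewrite the integrands `(Wᵢ y)⁻¹` and no longer recognise `hA₁`, `hA₂`.
  generalize ∫ y, (W₁ y)⁻¹ ∂μ = A₁ at hA₁ ⊢
  generalize ∫ y, (W₂ y)⁻¹ ∂μ = A₂ at hA₂ ⊢
  field_simp
  ring

/-- Variation identity for `E⁻¹`, exact two-weight form:
`δE⁻¹ = −E⁻¹·δW⁻¹·G₊ − G₋·δW·E⁻¹`. For weights `W₁, W₂` bounded between positive
constants, with `E₁⁻¹, E₂⁻¹` the corresponding inverse operators, `G₊⁽²⁾` built from `W₂`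
and `G₋⁽¹⁾` built from `W₁`, for every integrable `h` and every `x`:
`(E₂⁻¹ h)(x) − (E₁⁻¹ h)(x)
  = − E₁⁻¹((W₂⁻¹ − W₁⁻¹)·(G₊⁽²⁾ h))(x) − G₋⁽¹⁾((W₂ − W₁)·(E₂⁻¹ h))(x)`. -/
theorem opEinv_variation_two_weights
    {α : Type*} [MeasurableSpace α] (μ : Measure α) [IsFiniteMeasure μ]
    (hV : 0 < totalVol μ)
    (W₁ W₂ : α → ℝ) (hW₁ : Measurable W₁) (hW₂ : Measurable W₂)
    (c₁ C₁ : ℝ) (hc₁ : 0 < c₁) (hcC₁ : c₁ ≤ C₁)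
    (hbound₁ : ∀ x, c₁ ≤ W₁ x ∧ W₁ x ≤ C₁)
    (c₂ C₂ : ℝ) (hc₂ : 0 < c₂) (hcC₂ : c₂ ≤ C₂)
    (hbound₂ : ∀ x, c₂ ≤ W₂ x ∧ W₂ x ≤ C₂) :
    ∀ h : α → ℝ, Integrable h μ → ∀ x,
      opEinv μ W₂ h x - opEinv μ W₁ h x
        = - opEinv μ W₁ (fun y => ((W₂ y)⁻¹ - (W₁ y)⁻¹) * opGplus μ W₂ h y) x
          - opGminus μ W₁ (fun y => (W₂ y - W₁ y) * opEinv μ W₂ h y) x :=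
  opEinv_variation_two_weights_general μ hV W₁ W₂ hW₁ hW₂ c₁ C₁ hc₁ hbound₁ c₂ C₂ hc₂ hbound₂
end

section
/- (Variation of E⁻¹ applied to the constant function 1.) Let W₁ and W₂ both be measurable weights bounded between positive constants, with G₋⁽¹⁾ built from W₁. Then for every x ∈ α: W₂(x)⁻¹/⟨W₂⁻¹⟩ − W₁(x)⁻¹/⟨W₁⁻¹⟩ = − G₋⁽¹⁾( (W₂ − W₁) · W₂⁻¹/⟨W₂⁻¹⟩ )(x). (This is the two-weight form of δ(E⁻¹ 1) = −G₋ δW (E⁻¹ 1), using that E⁻¹ 1 = W⁻¹/⟨W⁻¹⟩ and that G₊ annihilates constants.) -/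
open MeasureTheory

private lemma alg_aux (V A₁ A₂ w₁ w₂ : ℝ) (hV : V ≠ 0) (h1 : A₁ ≠ 0) (h2 : A₂ ≠ 0)
    (hw1 : w₁ ≠ 0) (hw2 : w₂ ≠ 0) :
    w₂⁻¹ / (V⁻¹ * A₂) - w₁⁻¹ / (V⁻¹ * A₁)
      = -(w₁⁻¹ * ((w₂ - w₁) * w₂⁻¹ / (V⁻¹ * A₂)) - w₁⁻¹ * ((A₁ - A₂) / (V⁻¹ * A₂)) / A₁) := by
  field_simp
  ring

/-- Variation of `E⁻¹` applied to the constant function `1`.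
For weights `W₁, W₂` bounded between positive constants, with `G₋⁽¹⁾` built from `W₁`,
for every `x`:
`W₂(x)⁻¹/⟨W₂⁻¹⟩ − W₁(x)⁻¹/⟨W₁⁻¹⟩ = − G₋⁽¹⁾((W₂ − W₁)·W₂⁻¹/⟨W₂⁻¹⟩)(x)`. -/
theorem opEinv_one_variation_two_weights
    {α : Type*} [MeasurableSpace α] (μ : Measure α) [IsFiniteMeasure μ]
    (hV : 0 < totalVol μ)
    (W₁ W₂ : α → ℝ) (hW₁ : Measurable W₁) (hW₂ : Measurable W₂)
    (c₁ C₁ : ℝ) (hc₁ : 0 < c₁) (hcC₁ : c₁ ≤ C₁)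
    (hbound₁ : ∀ x, c₁ ≤ W₁ x ∧ W₁ x ≤ C₁)
    (c₂ C₂ : ℝ) (hc₂ : 0 < c₂) (hcC₂ : c₂ ≤ C₂)
    (hbound₂ : ∀ x, c₂ ≤ W₂ x ∧ W₂ x ≤ C₂) :
    ∀ x,
      (W₂ x)⁻¹ / avg μ (fun y => (W₂ y)⁻¹) - (W₁ x)⁻¹ / avg μ (fun y => (W₁ y)⁻¹)
        = - opGminus μ W₁
            (fun y => (W₂ y - W₁ y) * (W₂ y)⁻¹ / avg μ (fun z => (W₂ z)⁻¹)) x := by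

  have hne : Nonempty α := by
    rcases isEmpty_or_nonempty α with h | h
    · exfalso
      have h0 : (Set.univ : Set α) = ∅ := Set.univ_eq_empty_iff.2 h
      rw [totalVol, h0] at hV
      simp at hV
    · exact h
  obtain ⟨x₀⟩ := hne
  have hC₁ : (0:ℝ) < C₁ := lt_of_lt_of_le hc₁ hcC₁
  have hC₂ : (0:ℝ) < C₂ := lt_of_lt_of_le hc₂ hcC₂
  have hV' : totalVol μ ≠ 0 := ne_of_gt hV
  -- integrability
  have hint : ∀ (W : α → ℝ) (c C : ℝ), 0 < c → Measurable W →
      (∀ x, c ≤ W x ∧ W x ≤ C) → Integrable (fun y => (W y)⁻¹) μ := by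
    intro W c C hc hW hb
    refine Integrable.mono' (integrable_const c⁻¹) hW.inv.aestronglyMeasurable
      (Filter.Eventually.of_forall fun y => ?_)
    have h0 : 0 < W y := lt_of_lt_of_le hc (hb y).1
    rw [Real.norm_eq_abs, abs_of_nonneg (inv_nonneg.2 h0.le)]
    exact inv_anti₀ hc (hb y).1
  have hI1 := hint W₁ c₁ C₁ hc₁ hW₁ hbound₁
  have hI2 := hint W₂ c₂ C₂ hc₂ hW₂ hbound₂
  -- positivity of inverse integrals
  have hpos : ∀ (W : α → ℝ) (c C : ℝ), 0 < c → 0 < C → (∀ x, c ≤ W x ∧ W x ≤ C) →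
      Integrable (fun y => (W y)⁻¹) μ → 0 < ∫ y, (W y)⁻¹ ∂μ := by
    intro W c C hc hC hb hI
    have hlb : ∫ y, (C⁻¹ : ℝ) ∂μ ≤ ∫ y, (W y)⁻¹ ∂μ := by
      refine integral_mono (integrable_const _) hI fun y => ?_
      exact inv_anti₀ (lt_of_lt_of_le hc (hb y).1) (hb y).2
    have : (0:ℝ) < ∫ y, (C⁻¹ : ℝ) ∂μ := by
      rw [integral_const]
      have : (0:ℝ) < (μ Set.univ).toReal := hV
      positivity
    linarith
  have hA1 : 0 < ∫ y, (W₁ y)⁻¹ ∂μ := hpos W₁ c₁ C₁ hc₁ hC₁ hbound₁ hI1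
  have hA2 : 0 < ∫ y, (W₂ y)⁻¹ ∂μ := hpos W₂ c₂ C₂ hc₂ hC₂ hbound₂ hI2
  intro x
  have h1x : W₁ x ≠ 0 := ne_of_gt (lt_of_lt_of_le hc₁ (hbound₁ x).1)
  have h2x : W₂ x ≠ 0 := ne_of_gt (lt_of_lt_of_le hc₂ (hbound₂ x).1)
  set a : ℝ := avg μ (fun z => (W₂ z)⁻¹) with ha
  have ha' : a = (totalVol μ)⁻¹ * ∫ y, (W₂ y)⁻¹ ∂μ := rfl
  have ha0 : a ≠ 0 := by
    rw [ha']
    exact mul_ne_zero (inv_ne_zero hV') (ne_of_gt hA2)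
  have key : ∫ y, (W₁ y)⁻¹ * ((W₂ y - W₁ y) * (W₂ y)⁻¹ / a) ∂μ
      = ((∫ y, (W₁ y)⁻¹ ∂μ) - ∫ y, (W₂ y)⁻¹ ∂μ) / a := by
    rw [← integral_sub hI1 hI2, ← integral_div]
    refine integral_congr_ae (Filter.Eventually.of_forall fun y => ?_)
    have h1 : W₁ y ≠ 0 := ne_of_gt (lt_of_lt_of_le hc₁ (hbound₁ y).1)
    have h2 : W₂ y ≠ 0 := ne_of_gt (lt_of_lt_of_le hc₂ (hbound₂ y).1)
    show (W₁ y)⁻¹ * ((W₂ y - W₁ y) * (W₂ y)⁻¹ / a) = ((W₁ y)⁻¹ - (W₂ y)⁻¹) / a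
    rw [← mul_div_assoc]
    congr 1
    field_simp
  have hA : avg μ (fun y => (W₁ y)⁻¹) = (totalVol μ)⁻¹ * ∫ y, (W₁ y)⁻¹ ∂μ := rfl
  simp only [opGminus]
  rw [key, hA, ha']
  have e1 : (∫ y, (W₁ y)⁻¹ ∂μ) ≠ 0 := ne_of_gt hA1
  have e2 : (∫ y, (W₂ y)⁻¹ ∂μ) ≠ 0 := ne_of_gt hA2
  exact alg_aux (totalVol μ) _ _ _ _ hV' e1 e2 h1x h2x
end

section
/- (Determinant of the delocalization operator, finite-dimensional form.) Let n ≥ 1 and let W : Fin n → ℝ satisfy W i > 0 for all i. Let E be the n×n real matrix with entries E i j = (if i = j then 1 else 0) + 1/n − (W i)⁻¹·(W j)/n. Then det E = ( (∑ᵢ W i)/n ) · ( (∑ᵢ (W i)⁻¹)/n ). Moreover det E ≥ 1, and det E = 1 if and only if W is constant (W i = W j for all i, j). -/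
/-!
`discreteDeloc n W = 1 + (1/n)·𝟙𝟙ᵀ − (1/n)·W⁻¹Wᵀ` is a rank-two perturbation of the identity, so by
`det (1 + A B) = det (1 + B A)` its determinant is a `2 × 2` determinant, which evaluates to
`(∑ W / n) (∑ W⁻¹ / n)`. The bound and its equality case follow from the identity
`∑ᵢⱼ (Wᵢ − Wⱼ)² / (Wᵢ Wⱼ) = 2 ((∑ W)(∑ W⁻¹) − n²)`, whose left side is a sum of nonnegative terms
vanishing exactly when `W` is constant.
-/

open Matrix Finset

/-- The discrete delocalization matrix:
`E i j = δᵢⱼ + 1/n − (W i)⁻¹·(W j)/n`. -/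
noncomputable def discreteDeloc (n : ℕ) (W : Fin n → ℝ) : Matrix (Fin n) (Fin n) ℝ :=
  Matrix.of fun i j => (if i = j then (1 : ℝ) else 0) + 1 / (n : ℝ) - (W i)⁻¹ * W j / (n : ℝ)

namespace Matrix

variable {ι R : Type*} [Fintype ι] [DecidableEq ι] [CommRing R]

theorem det_one_add_vecMulVec_add_vecMulVec (u x v y : ι → R) :
    det (1 + vecMulVec u x + vecMulVec v y) =
      (1 + x ⬝ᵥ u) * (1 + y ⬝ᵥ v) - (x ⬝ᵥ v) * (y ⬝ᵥ u) := by
  have hfactor : vecMulVec u x + vecMulVec v y = (of ![u, v])ᵀ * of ![x, y] := by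
    ext i j
    simp [mul_apply, Fin.sum_univ_two, vecMulVec_apply]
  rw [add_assoc, hfactor, det_one_add_mul_comm, det_fin_two]
  simp [vecMul, dotProduct, mul_comm]

end Matrix

theorem discreteDeloc_eq (n : ℕ) (W : Fin n → ℝ) :
    discreteDeloc n W =
      1 + vecMulVec (fun _ => (n : ℝ)⁻¹) 1 + vecMulVec (fun i => -(W i)⁻¹ / n) W := by
  ext i j
  simp only [discreteDeloc, of_apply, Matrix.add_apply, Matrix.one_apply, vecMulVec_apply,
    Pi.one_apply]
  ring

theorem det_discreteDeloc {n : ℕ} (hn : n ≠ 0) {W : Fin n → ℝ} (hW : ∀ i, W i ≠ 0) :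
    (discreteDeloc n W).det = ((∑ i, W i) / n) * ((∑ i, (W i)⁻¹) / n) := by
  have hn' : (n : ℝ) ≠ 0 := Nat.cast_ne_zero.mpr hn
  rw [discreteDeloc_eq, det_one_add_vecMulVec_add_vecMulVec]
  simp only [dotProduct, one_mul, Pi.one_apply, sum_const, card_univ, Fintype.card_fin, nsmul_eq_mul]
  have hcancel : ∑ i, W i * (-(W i)⁻¹ / n) = -1 := by
    simp [mul_div_assoc', hW, hn']
  rw [hcancel, ← Finset.sum_mul, ← Finset.sum_div, Finset.sum_neg_distrib]
  field_simp
  ring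

section
variable {ι K : Type*} [Fintype ι] [Field K]

theorem sum_sum_sq_sub_div_mul (W : ι → K) (hW : ∀ i, W i ≠ 0) :
    ∑ i, ∑ j, (W i - W j) ^ 2 / (W i * W j) =
      2 * ((∑ i, W i) * (∑ i, (W i)⁻¹) - (Fintype.card ι : K) ^ 2) := by
  have hterm : ∀ i j, (W i - W j) ^ 2 / (W i * W j) = W i * (W j)⁻¹ + W j * (W i)⁻¹ - 2 := by
    intro i j
    field_simp [hW i, hW j]
    ring
  simp only [hterm, sum_sub_distrib, sum_add_distrib, sum_const, card_univ, nsmul_eq_mul]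
  rw [sum_comm (f := fun i j => W j * (W i)⁻¹), sum_mul_sum]
  ring

variable [LinearOrder K] [IsStrictOrderedRing K]

theorem sq_sub_div_mul_nonneg {a b : K} (ha : 0 < a) (hb : 0 < b) :
    0 ≤ (a - b) ^ 2 / (a * b) :=
  div_nonneg (sq_nonneg _) (mul_pos ha hb).le

theorem card_sq_le_sum_mul_sum_inv (W : ι → K) (hW : ∀ i, 0 < W i) :
    (Fintype.card ι : K) ^ 2 ≤ (∑ i, W i) * (∑ i, (W i)⁻¹) := by
  have h := sum_sum_sq_sub_div_mul W fun i => (hW i).ne'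
  have hnonneg : 0 ≤ ∑ i, ∑ j, (W i - W j) ^ 2 / (W i * W j) :=
    sum_nonneg fun i _ => sum_nonneg fun j _ => sq_sub_div_mul_nonneg (hW i) (hW j)
  linarith

theorem sum_mul_sum_inv_eq_card_sq_iff (W : ι → K) (hW : ∀ i, 0 < W i) :
    (∑ i, W i) * (∑ i, (W i)⁻¹) = (Fintype.card ι : K) ^ 2 ↔ ∀ i j, W i = W j := by
  have hterm : ∀ i j, (W i - W j) ^ 2 / (W i * W j) = 0 ↔ W i = W j := fun i j => by
    rw [div_eq_zero_iff, or_iff_left (mul_pos (hW i) (hW j)).ne', sq_eq_zero_iff, sub_eq_zero]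
  have hinner : ∀ i, 0 ≤ ∑ j, (W i - W j) ^ 2 / (W i * W j) :=
    fun i => sum_nonneg fun j _ => sq_sub_div_mul_nonneg (hW i) (hW j)
  calc (∑ i, W i) * (∑ i, (W i)⁻¹) = (Fintype.card ι : K) ^ 2
      ↔ ∑ i, ∑ j, (W i - W j) ^ 2 / (W i * W j) = 0 := by
        rw [sum_sum_sq_sub_div_mul W fun i => (hW i).ne', mul_eq_zero,
          or_iff_right two_ne_zero, sub_eq_zero]
    _ ↔ ∀ i j, (W i - W j) ^ 2 / (W i * W j) = 0 := by
        simp only [Fintype.sum_eq_zero_iff_of_nonneg hinner, funext_iff, Pi.zero_apply,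
          Fintype.sum_eq_zero_iff_of_nonneg fun i => sq_sub_div_mul_nonneg (hW _) (hW i)]
    _ ↔ ∀ i j, W i = W j := by simp only [hterm]

end

/-- Determinant of the delocalization operator, finite-dimensional form.
For `n ≥ 1` and `W : Fin n → ℝ` pointwise positive,
`det E = ((∑ᵢ W i)/n)·((∑ᵢ (W i)⁻¹)/n)`; moreover `det E ≥ 1`, with equality iff `W`
is constant. -/
theorem discreteDeloc_det (n : ℕ) (hn : 1 ≤ n) (W : Fin n → ℝ) (hW : ∀ i, 0 < W i) :
    (discreteDeloc n W).det = ((∑ i, W i) / (n : ℝ)) * ((∑ i, (W i)⁻¹) / (n : ℝ)) ∧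
    1 ≤ (discreteDeloc n W).det ∧
    ((discreteDeloc n W).det = 1 ↔ ∀ i j, W i = W j) := by
  have hdet := det_discreteDeloc (by omega) fun i => (hW i).ne'
  have hn2 : (0 : ℝ) < (Fintype.card (Fin n) : ℝ) ^ 2 := by
    rw [Fintype.card_fin]; positivity
  have hratio : (discreteDeloc n W).det =
      (∑ i, W i) * (∑ i, (W i)⁻¹) / (Fintype.card (Fin n) : ℝ) ^ 2 := by
    rw [hdet, Fintype.card_fin, div_mul_div_comm, sq]
  refine ⟨hdet, ?_, ?_⟩
  · rw [hratio, one_le_div hn2]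
    exact card_sq_le_sum_mul_sum_inv W hW
  · rw [hratio, div_eq_one_iff_eq hn2.ne']
    exact sum_mul_sum_inv_eq_card_sq_iff W hW
end

section
/- (Lemma: Inverse of the generalized delocalization operator E_ab.) The operator E_ab is invertible on integrable functions with inverse given by the explicit operator E_ab⁻¹: for every integrable h : α → ℝ and every x ∈ α one has E_ab(E_ab⁻¹ h)(x) = h(x) and E_ab⁻¹(E_ab h)(x) = h(x). -/
open MeasureTheory

/-- The generalized delocalization operator `E_ab`:
`(E_ab f)(x) = ⟨f⟩ + A(x)⁻¹·(B(x)⁻¹·f(x) − ⟨B⁻¹·f⟩)`. -/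
noncomputable def opEab {α : Type*} [MeasurableSpace α] (μ : Measure α) (A B : α → ℝ)
    (f : α → ℝ) : α → ℝ :=
  fun x => avg μ f + (A x)⁻¹ * ((B x)⁻¹ * f x - avg μ (fun y => (B y)⁻¹ * f y))

/-- The operator `E_ab⁻¹`:
`(E_ab⁻¹ h)(x) = B(x)·A(x)·h(x) − B(x)·A(x)·(∫A·h)/(∫A) − B(x)·(∫B·A·h)/(∫B)
  + B(x)·((V + ∫B·A)/(∫B))·(∫A·h)/(∫A)`. -/
noncomputable def opEabInv {α : Type*} [MeasurableSpace α] (μ : Measure α) (A B : α → ℝ)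
    (h : α → ℝ) : α → ℝ :=
  fun x => B x * A x * h x
    - B x * A x * (∫ y, A y * h y ∂μ) / (∫ y, A y ∂μ)
    - B x * (∫ y, B y * A y * h y ∂μ) / (∫ y, B y ∂μ)
    + B x * ((totalVol μ + ∫ y, B y * A y ∂μ) / (∫ y, B y ∂μ))
        * (∫ y, A y * h y ∂μ) / (∫ y, A y ∂μ)

/-!
Write `s := ∫ A·h / ∫ A`. Then `E_ab⁻¹ h = B·(A·(h - s) + t)` for a constant `t` chosen so that
`⟨E_ab⁻¹ h⟩ = s`; since also `⟨A·(h - s)⟩ = 0`, applying `E_ab` returns `s + (h - s) = h`.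
Conversely `E_ab h = a + A⁻¹·(B⁻¹·h - b)` with `a = ⟨h⟩`, `b = ⟨B⁻¹·h⟩`, and the two moments
`∫ A·E_ab h = a·∫ A` and `∫ B·A·E_ab h = a·(V + ∫ B·A) - b·∫ B` are exactly what `E_ab⁻¹`
subtracts to leave `h`.
-/

section

variable {α : Type*} [MeasurableSpace α] {μ : Measure α}

theorem totalVol_eq_measureReal (μ : Measure α) : totalVol μ = μ.real Set.univ := rfl

theorem integral_pos_of_forall_le [IsFiniteMeasure μ] (hV : 0 < totalVol μ) {f : α → ℝ}
    {c : ℝ} (hc : 0 < c) (hf : Integrable f μ) (hcf : ∀ x, c ≤ f x) : 0 < ∫ x, f x ∂μ :=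
  calc 0 < totalVol μ * c := mul_pos hV hc
    _ = ∫ _, c ∂μ := by rw [integral_const, smul_eq_mul, totalVol_eq_measureReal]
    _ ≤ ∫ x, f x ∂μ := integral_mono (integrable_const c) hf hcf

variable {A B h : α → ℝ}

theorem opEab_opEabInv [IsFiniteMeasure μ] (hV : totalVol μ ≠ 0) (hA : ∀ x, A x ≠ 0)
    (hB : ∀ x, B x ≠ 0) (hIA : ∫ y, A y ∂μ ≠ 0) (hIB : ∫ y, B y ∂μ ≠ 0)
    (hAi : Integrable A μ) (hBi : Integrable B μ) (hBAi : Integrable (fun y => B y * A y) μ)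
    (hAh : Integrable (fun y => A y * h y) μ) (hBAh : Integrable (fun y => B y * A y * h y) μ)
    (x : α) : opEab μ A B (opEabInv μ A B h) x = h x := by
  set s := (∫ y, A y * h y ∂μ) / ∫ y, A y ∂μ
  set t := (totalVol μ + ∫ y, B y * A y ∂μ) / (∫ y, B y ∂μ) * s
    - (∫ y, B y * A y * h y ∂μ) / ∫ y, B y ∂μ
  have hg : opEabInv μ A B h = fun y => B y * A y * h y - s * (B y * A y) + t * B y := by
    funext y
    simp only [opEabInv]
    ring
  have hBg : (fun y => (B y)⁻¹ * opEabInv μ A B h y) = fun y => A y * h y - s * A y + t := by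
    funext y
    rw [hg]
    field_simp [hB y]
  have havg_Bg : avg μ (fun y => (B y)⁻¹ * opEabInv μ A B h y) = t := by
    rw [hBg, avg, integral_add (f := fun y => A y * h y - s * A y) (hAh.sub (hAi.const_mul s))
      (integrable_const t),
      integral_sub hAh (hAi.const_mul s), integral_const_mul, integral_const, smul_eq_mul,
      ← totalVol_eq_measureReal]
    simp only [s]
    field_simp
    ring
  have havg_g : avg μ (opEabInv μ A B h) = s := by
    rw [hg, avg, integral_add (f := fun y => B y * A y * h y - s * (B y * A y))
      (hBAh.sub (hBAi.const_mul s)) (hBi.const_mul t),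
      integral_sub hBAh (hBAi.const_mul s), integral_const_mul, integral_const_mul]
    simp only [s, t]
    field_simp
    ring
  rw [opEab, havg_g, havg_Bg, congrFun hBg x]
  field_simp [hA x]
  ring

theorem opEabInv_opEab [IsFiniteMeasure μ] (hV : totalVol μ ≠ 0) (hA : ∀ x, A x ≠ 0)
    (hB : ∀ x, B x ≠ 0) (hIA : ∫ y, A y ∂μ ≠ 0) (hIB : ∫ y, B y ∂μ ≠ 0)
    (hAi : Integrable A μ) (hBi : Integrable B μ) (hBAi : Integrable (fun y => B y * A y) μ)
    (hh : Integrable h μ) (hBh : Integrable (fun y => (B y)⁻¹ * h y) μ)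
    (x : α) : opEabInv μ A B (opEab μ A B h) x = h x := by
  set a := avg μ h
  set b := avg μ (fun y => (B y)⁻¹ * h y)
  have hAf : (fun y => A y * opEab μ A B h y) = fun y => a * A y + (B y)⁻¹ * h y - b := by
    funext y
    change A y * (a + (A y)⁻¹ * ((B y)⁻¹ * h y - b)) = _
    rw [mul_add, mul_inv_cancel_left₀ (hA y)]
    ring
  have hBAf : (fun y => B y * A y * opEab μ A B h y) = fun y => a * (B y * A y) + h y - b * B y := by
    funext y
    rw [mul_assoc, congrFun hAf y]
    field_simp [hB y]
  have hmoment_A : ∫ y, A y * opEab μ A B h y ∂μ = a * ∫ y, A y ∂μ := by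
    rw [hAf, integral_sub (f := fun y => a * A y + (B y)⁻¹ * h y) ((hAi.const_mul a).add hBh)
      (integrable_const b),
      integral_add (hAi.const_mul a) hBh, integral_const_mul, integral_const, smul_eq_mul,
      ← totalVol_eq_measureReal]
    simp only [b, avg]
    field_simp
    ring
  have hmoment_BA : ∫ y, B y * A y * opEab μ A B h y ∂μ
      = a * (totalVol μ + ∫ y, B y * A y ∂μ) - b * ∫ y, B y ∂μ := by
    rw [hBAf, integral_sub (f := fun y => a * (B y * A y) + h y) ((hBAi.const_mul a).add hh)
      (hBi.const_mul b),
      integral_add (hBAi.const_mul a) hh, integral_const_mul, integral_const_mul]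
    simp only [a, avg]
    field_simp
    ring
  rw [opEabInv, hmoment_A, hmoment_BA, congrFun hBAf x]
  field_simp
  ring

end

theorem opEab_inverse_general
    {α : Type*} [MeasurableSpace α] (μ : Measure α) [IsFiniteMeasure μ]
    (hV : 0 < totalVol μ)
    (A B : α → ℝ) (hA : Measurable A) (hB : Measurable B)
    (c C : ℝ) (hc : 0 < c)
    (hboundA : ∀ x, c ≤ A x ∧ A x ≤ C) (hboundB : ∀ x, c ≤ B x ∧ B x ≤ C) :
    ∀ h : α → ℝ, Integrable h μ → ∀ x,
      opEab μ A B (opEabInv μ A B h) x = h x ∧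
      opEabInv μ A B (opEab μ A B h) x = h x := by
  intro h hh x
  have hApos : ∀ x, 0 < A x := fun x => hc.trans_le (hboundA x).1
  have hBpos : ∀ x, 0 < B x := fun x => hc.trans_le (hboundB x).1
  have hAbdd : ∀ᵐ x ∂μ, ‖A x‖ ≤ C := ae_of_all _ fun x => by
    simpa [abs_of_pos (hApos x)] using (hboundA x).2
  have hBbdd : ∀ᵐ x ∂μ, ‖B x‖ ≤ C := ae_of_all _ fun x => by
    simpa [abs_of_pos (hBpos x)] using (hboundB x).2
  have hBinv_bdd : ∀ᵐ x ∂μ, ‖(B x)⁻¹‖ ≤ c⁻¹ := ae_of_all _ fun x => by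
    simpa [abs_of_pos (hBpos x)] using inv_anti₀ hc (hboundB x).1
  have hAi : Integrable A μ := .of_bound hA.aestronglyMeasurable C hAbdd
  have hBi : Integrable B μ := .of_bound hB.aestronglyMeasurable C hBbdd
  have hBAi : Integrable (fun y => B y * A y) μ := hAi.bdd_mul hB.aestronglyMeasurable hBbdd
  have hAh : Integrable (fun y => A y * h y) μ := hh.bdd_mul hA.aestronglyMeasurable hAbdd
  have hBAh : Integrable (fun y => B y * A y * h y) μ := by
    simpa only [mul_assoc] using hAh.bdd_mul hB.aestronglyMeasurable hBbdd
  have hBh : Integrable (fun y => (B y)⁻¹ * h y) μ :=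
    hh.bdd_mul hB.inv.aestronglyMeasurable hBinv_bdd
  have hA0 : ∀ x, A x ≠ 0 := fun x => (hApos x).ne'
  have hB0 : ∀ x, B x ≠ 0 := fun x => (hBpos x).ne'
  have hIA := (integral_pos_of_forall_le hV hc hAi fun x => (hboundA x).1).ne'
  have hIB := (integral_pos_of_forall_le hV hc hBi fun x => (hboundB x).1).ne'
  exact ⟨opEab_opEabInv hV.ne' hA0 hB0 hIA hIB hAi hBi hBAi hAh hBAh x,
    opEabInv_opEab hV.ne' hA0 hB0 hIA hIB hAi hBi hBAi hh hBh x⟩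

/-- Lemma: Inverse of the generalized delocalization operator `E_ab`.
`E_ab` is invertible on integrable functions with inverse `E_ab⁻¹`: for every integrable
`h` and every `x`, `E_ab(E_ab⁻¹ h)(x) = h(x)` and `E_ab⁻¹(E_ab h)(x) = h(x)`. -/
theorem opEab_inverse
    {α : Type*} [MeasurableSpace α] (μ : Measure α) [IsFiniteMeasure μ]
    (hV : 0 < totalVol μ)
    (A B : α → ℝ) (hA : Measurable A) (hB : Measurable B)
    (c C : ℝ) (hc : 0 < c) (hcC : c ≤ C)
    (hboundA : ∀ x, c ≤ A x ∧ A x ≤ C) (hboundB : ∀ x, c ≤ B x ∧ B x ≤ C) :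
    ∀ h : α → ℝ, Integrable h μ → ∀ x,
      opEab μ A B (opEabInv μ A B h) x = h x ∧
      opEabInv μ A B (opEab μ A B h) x = h x :=
  opEab_inverse_general μ hV A B hA hB c C hc hboundA hboundB
end
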